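/- arXiv:1811.04182 — 2 statements merged into one kernel-verified Lean document; each statement's English description precedes it below -/
import Mathlib

section
/- Let X = Y × F be a product of complex manifolds with a Kähler metric g such that the splitting T_X = pr₁*T_Y ⊕ pr₂*T_F is g-orthogonal and both summands are preserved by the Chern connection D of (T_X, g). Then for any local holomorphic vector field w on F, the norm |pr₂*w|_g is constant along each fiber {p is fixed in F}: Y × {p}; consequently the restriction of g to the F-factor is independent of the point of Y, and g₂ = pr₂* g_F for a metric g_F on F. -/
/-!
Torsion-freeness, together with the fact that `D` preserves both summands, computes the covariant
derivative of a vertical field `ν • (0, b)` along a constant horizontal field `(a, 0)` as the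
vertical part of their Lie bracket, `dν(a, 0) • (0, b)`. Metric compatibility then gives
`∂_(a,0) (ν · g(0,b)(0,b')) = dν(a,0) · g(0,b)(0,b')`. For `ν = 1` this says that the vertical
coefficients of `g` have vanishing horizontal derivatives. For a `ν` with `dν(a,0) ≠ 0` it shows
that the diagonal coefficients are differentiable: otherwise the left side would be the junk value
`0`, while the right side is nonzero by positivity. Hence `|(0, b)|²` is constant on each slice
`Y × {p}`, and by polarization so is the restriction of `g` to the vertical summand.
-/

open VectorField ComplexConjugate

section Hermitian

variable {E : Type*} [AddCommGroup E] [Module ℂ E]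

theorem hermitian_apply_add_smul_self {B : E → E → ℂ} (hlin : ∀ w, IsLinearMap ℂ (B · w))
    (hherm : ∀ v w, B v w = conj (B w v)) (v w : E) (c : ℂ) :
    B (v + c • w) (v + c • w) = B v v + c * B w v + conj c * B v w + c * conj c * B w w := by
  have hright : ∀ u, B u (v + c • w) = B u v + conj c * B u w := fun u => by
    rw [hherm, (hlin u).map_add, (hlin u).map_smul, smul_eq_mul, map_add, map_mul,
      ← hherm, ← hherm]
  rw [(hlin _).map_add, (hlin _).map_smul, smul_eq_mul, hright, hright]
  ring

theorem hermitian_eq_of_apply_self_eq {B₁ B₂ : E → E → ℂ}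
    (hlin₁ : ∀ w, IsLinearMap ℂ (B₁ · w)) (hherm₁ : ∀ v w, B₁ v w = conj (B₁ w v))
    (hlin₂ : ∀ w, IsLinearMap ℂ (B₂ · w)) (hherm₂ : ∀ v w, B₂ v w = conj (B₂ w v))
    (hdiag : ∀ v, B₁ v v = B₂ v v) (v w : E) : B₁ v w = B₂ v w := by
  have h₁ := hdiag (v + (1 : ℂ) • w)
  have h_I := hdiag (v + Complex.I • w)
  rw [hermitian_apply_add_smul_self hlin₁ hherm₁, hermitian_apply_add_smul_self hlin₂ hherm₂,
    hdiag v, hdiag w] at h₁ h_I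
  simp only [map_one, Complex.conj_I] at h₁ h_I
  linear_combination (h₁ + Complex.I * h_I + (B₁ v w - B₁ w v - B₂ v w + B₂ w v) * Complex.I_sq) / 2

end Hermitian

theorem eq_of_fderiv_apply_inl_eq_zero {E₁ E₂ G : Type*}
    [NormedAddCommGroup E₁] [NormedSpace ℝ E₁] [NormedAddCommGroup E₂] [NormedSpace ℝ E₂]
    [NormedAddCommGroup G] [NormedSpace ℝ G] {f : E₁ × E₂ → G} {p : E₂}
    (hf : ∀ y, DifferentiableAt ℝ f (y, p)) (hf' : ∀ y a, fderiv ℝ f (y, p) (a, 0) = 0)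
    (y y' : E₁) : f (y, p) = f (y', p) := by
  have hslice : ∀ y, HasFDerivAt (fun y => f (y, p))
      ((fderiv ℝ f (y, p)).comp (ContinuousLinearMap.inl ℝ E₁ E₂)) y := fun y =>
    (hf y).hasFDerivAt.comp y (hasFDerivAt_prodMk_left y p)
  refine is_const_of_fderiv_eq_zero (fun y => (hslice y).differentiableAt) (fun y => ?_) y y'
  rw [(hslice y).fderiv]
  ext a
  simpa using hf' y a

theorem differentiableAt_of_differentiableAt_mul {𝕜 E R : Type*} [NontriviallyNormedField 𝕜]
    [NormedAddCommGroup E] [NormedSpace 𝕜 E] [NormedField R] [NormedAlgebra 𝕜 R]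
    {μ f : E → R} {x : E} (hμ : DifferentiableAt 𝕜 μ x) (hμx : μ x ≠ 0)
    (hμf : DifferentiableAt 𝕜 (fun z => μ z * f z) x) : DifferentiableAt 𝕜 f x := by
  refine ((hμ.inv hμx).mul hμf).congr_of_eventuallyEq ?_
  filter_upwards [hμ.continuousAt.eventually_ne hμx] with z hz
  simp [hz]

namespace Connection

variable {E : Type*} [NormedAddCommGroup E] [NormedSpace ℝ E]

def IsTorsionFree (D : (E → E) → (E → E) → E → E) : Prop :=
  ∀ u w : E → E, Differentiable ℝ u → Differentiable ℝ w →
    ∀ x, lieBracket ℝ u w x = D u w x - D w u x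

def IsMetric (g : E → E → E → ℂ) (D : (E → E) → (E → E) → E → E) : Prop :=
  ∀ u f₁ f₂ : E → E, Differentiable ℝ f₁ → Differentiable ℝ f₂ → ∀ x,
    fderiv ℝ (fun y => g y (f₁ y) (f₂ y)) x (u x) = g x (D u f₁ x) (f₂ x) + g x (f₁ x) (D u f₂ x)

section Splitting

variable {Y F : Type*} [Zero Y] [Zero F]

def PreservesVertical (D : (Y × F → Y × F) → (Y × F → Y × F) → Y × F → Y × F) : Prop :=
  ∀ u w : Y × F → Y × F, (∀ x, (w x).1 = 0) → ∀ x, (D u w x).1 = 0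

def PreservesHorizontal (D : (Y × F → Y × F) → (Y × F → Y × F) → Y × F → Y × F) : Prop :=
  ∀ u w : Y × F → Y × F, (∀ x, (w x).2 = 0) → ∀ x, (D u w x).2 = 0

end Splitting

variable {Y F : Type*} [NormedAddCommGroup Y] [NormedSpace ℂ Y]
  [NormedAddCommGroup F] [NormedSpace ℂ F]
variable {g : Y × F → Y × F → Y × F → ℂ} {D : (Y × F → Y × F) → (Y × F → Y × F) → Y × F → Y × F}

theorem apply_eq_lieBracket_of_horizontal_of_vertical (htor : IsTorsionFree D)
    (hvert : PreservesVertical D) (hhor : PreservesHorizontal D)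
    {u w : Y × F → Y × F} (hu : Differentiable ℝ u) (hw : Differentiable ℝ w)
    (hu_hor : ∀ x, (u x).2 = 0) (hw_vert : ∀ x, (w x).1 = 0) (x : Y × F) :
    D u w x = (0, (lieBracket ℝ u w x).2) := by
  rw [htor u w hu hw x]
  ext
  · exact hvert u w hw_vert x
  · simp [hhor w u hu_hor x]

theorem fderiv_mul_vertical_coeff_apply_horizontal
    (hsesq : ∀ x, ∀ b : Y × F, IsLinearMap ℂ fun a => g x a b)
    (hherm : ∀ x a b, g x a b = conj (g x b a)) (htor : IsTorsionFree D) (hmetric : IsMetric g D)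
    (hvert : PreservesVertical D) (hhor : PreservesHorizontal D)
    {μ : Y × F → ℂ} (hμ : Differentiable ℝ μ) (a : Y) (b b' : F) (x : Y × F) :
    fderiv ℝ (fun z => μ z * g z (0, b) (0, b')) x (a, 0) =
      fderiv ℝ μ x (a, 0) * g x (0, b) (0, b') := by
  have hD : ∀ ν : Y × F → ℂ, Differentiable ℝ ν → ∀ c : F,
      D (fun _ => (a, 0)) (fun z => ν z • ((0 : Y), c)) x = fderiv ℝ ν x (a, 0) • (0, c) := by
    intro ν hν c
    rw [apply_eq_lieBracket_of_horizontal_of_vertical htor hvert hhor (differentiable_const _)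
      (hν.smul_const _) (fun _ => rfl) (fun _ => by simp), lieBracket,
      fderiv_smul_const (hν x), fderiv_fun_const]
    simp
  have hmet := hmetric (fun _ => (a, 0)) (fun z => μ z • ((0 : Y), b))
    (fun _ => (1 : ℂ) • ((0 : Y), b')) (hμ.smul_const _) ((differentiable_const _).smul_const _) x
  rw [hD μ hμ, hD _ (differentiable_const 1)] at hmet
  simp only [one_smul, fderiv_fun_const, Pi.zero_apply, zero_apply, zero_smul] at hmet
  have hzero : g x (μ x • (0, b)) 0 = 0 := by rw [hherm, (hsesq x _).map_zero, map_zero]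
  rw [hzero, add_zero] at hmet
  simpa only [(hsesq _ _).map_smul, smul_eq_mul] using hmet

theorem differentiableAt_vertical_coeff [Nontrivial Y]
    (hsesq : ∀ x, ∀ b : Y × F, IsLinearMap ℂ fun a => g x a b)
    (hherm : ∀ x a b, g x a b = conj (g x b a)) (hpos : ∀ x a, a ≠ 0 → 0 < (g x a a).re)
    (htor : IsTorsionFree D) (hmetric : IsMetric g D)
    (hvert : PreservesVertical D) (hhor : PreservesHorizontal D)
    {b : F} (hb : b ≠ 0) (x₀ : Y × F) :
    DifferentiableAt ℝ (fun z => g z (0, b) (0, b)) x₀ := by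
  by_contra hnd
  obtain ⟨a, ha⟩ := exists_ne (0 : Y)
  obtain ⟨ℓ, hℓ⟩ := SeparatingDual.exists_eq_one (R := ℝ) ha
  set L : Y × F →L[ℝ] ℂ := Complex.ofRealCLM.comp (ℓ.comp (ContinuousLinearMap.fst ℝ Y F))
  set μ : Y × F → ℂ := fun z => 1 + L (z - x₀)
  have hμ : ∀ z, HasFDerivAt μ L z := fun z =>
    ((L.hasFDerivAt).comp z ((hasFDerivAt_id z).sub_const x₀)).const_add 1
  have hμQ : ¬ DifferentiableAt ℝ (fun z => μ z * g z (0, b) (0, b)) x₀ := fun h =>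
    hnd (differentiableAt_of_differentiableAt_mul (hμ x₀).differentiableAt (by simp [μ]) h)
  have key := fderiv_mul_vertical_coeff_apply_horizontal hsesq hherm htor hmetric hvert hhor
    (fun z => (hμ z).differentiableAt) a b b x₀
  rw [fderiv_zero_of_not_differentiableAt hμQ, (hμ x₀).fderiv] at key
  simp only [zero_apply, L, ContinuousLinearMap.comp_apply, ContinuousLinearMap.coe_fst',
    hℓ, Complex.ofRealCLM_apply, Complex.ofReal_one, one_mul] at key
  have hpos' := hpos x₀ (0, b) (by simpa using hb)
  rw [← key, Complex.zero_re] at hpos'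
  exact lt_irrefl 0 hpos'

theorem vertical_coeff_self_eq (hsesq : ∀ x, ∀ b : Y × F, IsLinearMap ℂ fun a => g x a b)
    (hherm : ∀ x a b, g x a b = conj (g x b a)) (hpos : ∀ x a, a ≠ 0 → 0 < (g x a a).re)
    (htor : IsTorsionFree D) (hmetric : IsMetric g D)
    (hvert : PreservesVertical D) (hhor : PreservesHorizontal D) (b p : F) (y y' : Y) :
    g (y, p) (0, b) (0, b) = g (y', p) (0, b) (0, b) := by
  rcases subsingleton_or_nontrivial Y with hY | hY
  · rw [Subsingleton.elim y y']
  by_cases hb : b = 0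
  · simp only [hb, Prod.mk_zero_zero, (hsesq _ _).map_zero]
  refine eq_of_fderiv_apply_inl_eq_zero
    (fun y => differentiableAt_vertical_coeff hsesq hherm hpos htor hmetric hvert hhor hb _)
    (fun y a => ?_) y y'
  simpa using fderiv_mul_vertical_coeff_apply_horizontal hsesq hherm htor hmetric hvert hhor
    (differentiable_const 1) a b b (y, p)

end Connection

theorem vertical_metric_independent_of_base_general
    {Y F : Type*} [NormedAddCommGroup Y] [NormedSpace ℂ Y]
    [NormedAddCommGroup F] [NormedSpace ℂ F]
    -- the hermitian metric `g` on `T_X`, `X = Y × F`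
    (g : Y × F → (Y × F) → (Y × F) → ℂ)
    (hsesq : ∀ x, ∀ b : Y × F, IsLinearMap ℂ fun a => g x a b)
    (hherm : ∀ x a b, g x a b = (starRingEnd ℂ) (g x b a))
    (hpos : ∀ x a, a ≠ 0 → 0 < (g x a a).re)
    -- the Chern connection `D` of `(T_X, g)`
    (D : (Y × F → Y × F) → (Y × F → Y × F) → (Y × F → Y × F))
    -- torsion-freeness (the metric `g` is Kähler)
    (htor : ∀ u w : Y × F → Y × F, Differentiable ℝ u → Differentiable ℝ w →
      ∀ x, VectorField.lieBracket ℝ u w x = D u w x - D w u x)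
    -- compatibility with the metric
    (hmetric : ∀ (u f₁ f₂ : Y × F → Y × F), Differentiable ℝ f₁ →
      Differentiable ℝ f₂ → ∀ x,
      fderiv ℝ (fun y => g y (f₁ y) (f₂ y)) x (u x) =
        g x (D u f₁ x) (f₂ x) + g x (f₁ x) (D u f₂ x))
    -- `D` preserves the vertical subbundle `pr₂*T_F` …
    (hvert : ∀ u w : Y × F → Y × F, (∀ x, (w x).1 = 0) →
      ∀ x, (D u w x).1 = 0)
    -- … and the horizontal subbundle `pr₁*T_Y`
    (hhor : ∀ u w : Y × F → Y × F, (∀ x, (w x).2 = 0) →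
      ∀ x, (D u w x).2 = 0) :
    -- `|pr₂*w|_g` is constant along each `Y × {p}` …
    (∀ w : F → F, Differentiable ℂ w → ∀ (p : F) (y y' : Y),
      g (y, p) (0, w p) (0, w p) = g (y', p) (0, w p) (0, w p)) ∧
    -- … and `g₂ = pr₂* g_F` for a metric `g_F` on `F`
    (∃ gF : F → F → F → ℂ, ∀ (y : Y) (f : F) (b b' : F),
      g (y, f) (0, b) (0, b') = gF f b b') := by
  have hlin : ∀ x w, IsLinearMap ℂ fun v : F => g x (0, v) (0, w) := fun x w =>
    ((IsLinearMap.mk' _ (hsesq x (0, w))).comp (LinearMap.inr ℂ Y F)).isLinear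
  have hdiag := Connection.vertical_coeff_self_eq hsesq hherm hpos htor hmetric hvert hhor
  refine ⟨fun w _ p y y' => hdiag (w p) p y y', fun f b b' => g (0, f) (0, b) (0, b'),
    fun y f b b' => ?_⟩
  exact hermitian_eq_of_apply_self_eq (hlin _) (fun _ _ => hherm _ _ _) (hlin _)
    (fun _ _ => hherm _ _ _) (fun v => hdiag v f y 0) b b'

theorem vertical_metric_independent_of_base
    {Y F : Type*} [NormedAddCommGroup Y] [NormedSpace ℂ Y]
    [NormedAddCommGroup F] [NormedSpace ℂ F]
    -- the hermitian metric `g` on `T_X`, `X = Y × F`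
    (g : Y × F → (Y × F) → (Y × F) → ℂ)
    (hsesq : ∀ x, ∀ b : Y × F, IsLinearMap ℂ fun a => g x a b)
    (hherm : ∀ x a b, g x a b = (starRingEnd ℂ) (g x b a))
    (hpos : ∀ x a, a ≠ 0 → 0 < (g x a a).re)
    -- the Chern connection `D` of `(T_X, g)`
    (D : (Y × F → Y × F) → (Y × F → Y × F) → (Y × F → Y × F))
    -- torsion-freeness (the metric `g` is Kähler)
    (htor : ∀ u w : Y × F → Y × F, Differentiable ℝ u → Differentiable ℝ w →
      ∀ x, VectorField.lieBracket ℝ u w x = D u w x - D w u x)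
    -- compatibility with the metric
    (hmetric : ∀ (u f₁ f₂ : Y × F → Y × F), Differentiable ℝ f₁ →
      Differentiable ℝ f₂ → ∀ x,
      fderiv ℝ (fun y => g y (f₁ y) (f₂ y)) x (u x) =
        g x (D u f₁ x) (f₂ x) + g x (f₁ x) (D u f₂ x))
    -- `D` preserves the vertical subbundle `pr₂*T_F` …
    (hvert : ∀ u w : Y × F → Y × F, (∀ x, (w x).1 = 0) →
      ∀ x, (D u w x).1 = 0)
    -- … and the horizontal subbundle `pr₁*T_Y`
    (hhor : ∀ u w : Y × F → Y × F, (∀ x, (w x).2 = 0) →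
      ∀ x, (D u w x).2 = 0)
    -- the splitting `T_X = pr₁*T_Y ⊕ pr₂*T_F` is `g`-orthogonal
    (horth : ∀ x (a : Y) (b : F), g x (a, 0) (0, b) = 0) :
    -- `|pr₂*w|_g` is constant along each `Y × {p}` …
    (∀ w : F → F, Differentiable ℂ w → ∀ (p : F) (y y' : Y),
      g (y, p) (0, w p) (0, w p) = g (y', p) (0, w p) (0, w p)) ∧
    -- … and `g₂ = pr₂* g_F` for a metric `g_F` on `F`
    (∃ gF : F → F → F → ℂ, ∀ (y : Y) (f : F) (b b' : F),
      g (y, f) (0, b) (0, b') = gF f b b') :=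
  vertical_metric_independent_of_base_general g hsesq hherm hpos D htor hmetric hvert hhor
end

section
/- Let g be a Kähler metric on a compact Kähler manifold X with semi-positive holomorphic sectional curvature H_g, and suppose e ∈ T_{X,p} is a unit vector with H_g([e]) = 0 (i.e. e is a minimizer of H_g). Then for every tangent vector v ∈ T_{X,p}, the curvature term R_g(v, v̄, e, ē) is non-negative. -/
/-!
Since `H ≥ 0` vanishes at `e`, the real quartic `t ↦ R(e + t w)` (all four slots equal) has
a minimum at `t = 0`, so the `t²`-coefficient of its even part, the second variation `S(e, w)`,
has non-negative real part. Replacing `w` by `i w` flips the sign of the two terms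
`R(w, ē, w, ē)` and `R(e, w̄, e, w̄)` of `S(e, w)` and fixes the other four, which the Kähler
symmetries identify with `R(w, w̄, e, ē)`; hence `S(e, w) + S(e, i w) = 8 R(w, w̄, e, ē)`.
-/

open scoped ComplexConjugate
open Filter Topology

lemma nonneg_of_forall_sq_mul_add_pow_four_mul_nonneg {a b : ℝ}
    (h : ∀ t : ℝ, 0 ≤ t ^ 2 * a + t ^ 4 * b) : 0 ≤ a := by
  have hlim : Tendsto (fun t : ℝ => a + t ^ 2 * b) (𝓝[≠] 0) (𝓝 a) := by
    have : Continuous fun t : ℝ => a + t ^ 2 * b := by fun_prop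
    simpa using (this.tendsto 0).mono_left nhdsWithin_le_nhds
  refine ge_of_tendsto hlim (eventually_nhdsWithin_of_forall fun t (ht : t ≠ 0) => ?_)
  refine nonneg_of_mul_nonneg_right ?_ (sq_pos_of_ne_zero ht)
  linarith [h t]

section Bisesquilinear

variable {V : Type*} [AddCommGroup V] [Module ℂ V]

/-- `R x y z u` models `R(x, ȳ, z, ū)`. -/
structure IsBisesquilinear (R : V → V → V → V → ℂ) : Prop where
  map_add₁ : ∀ x x' y z u, R (x + x') y z u = R x y z u + R x' y z u
  map_smul₁ : ∀ (c : ℂ) x y z u, R (c • x) y z u = c * R x y z u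
  map_add₂ : ∀ x y y' z u, R x (y + y') z u = R x y z u + R x y' z u
  map_smul₂ : ∀ (c : ℂ) x y z u, R x (c • y) z u = conj c * R x y z u
  map_add₃ : ∀ x y z z' u, R x y (z + z') u = R x y z u + R x y z' u
  map_smul₃ : ∀ (c : ℂ) x y z u, R x y (c • z) u = c * R x y z u
  map_add₄ : ∀ x y z u u', R x y z (u + u') = R x y z u + R x y z u'
  map_smul₄ : ∀ (c : ℂ) x y z u, R x y z (c • u) = conj c * R x y z u

/-- The coefficient of `t²` in `R(x + t w)` with all four slots equal. -/
def secondVariation (R : V → V → V → V → ℂ) (x w : V) : ℂ :=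
  R w w x x + R w x w x + R w x x w + R x w w x + R x w x w + R x x w w

namespace IsBisesquilinear

variable {R : V → V → V → V → ℂ}

lemma apply_add_smul_add_apply_sub_smul (hR : IsBisesquilinear R) (x w : V) (t : ℝ) :
    R (x + (t : ℂ) • w) (x + (t : ℂ) • w) (x + (t : ℂ) • w) (x + (t : ℂ) • w)
        + R (x - (t : ℂ) • w) (x - (t : ℂ) • w) (x - (t : ℂ) • w) (x - (t : ℂ) • w)
      = 2 * R x x x x + 2 * (t : ℂ) ^ 2 * secondVariation R x w
        + 2 * (t : ℂ) ^ 4 * R w w w w := by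
  simp only [sub_eq_add_neg, ← neg_smul, secondVariation, hR.map_add₁, hR.map_add₂, hR.map_add₃,
    hR.map_add₄, hR.map_smul₁, hR.map_smul₂, hR.map_smul₃, hR.map_smul₄, map_neg,
    Complex.conj_ofReal]
  ring

lemma secondVariation_re_nonneg (hR : IsBisesquilinear R) (hsemi : ∀ v, 0 ≤ (R v v v v).re)
    {e : V} (hmin : R e e e e = 0) (w : V) : 0 ≤ (secondVariation R e w).re := by
  refine nonneg_of_forall_sq_mul_add_pow_four_mul_nonneg (b := (R w w w w).re) fun t => ?_
  have hsum := congrArg Complex.re (hR.apply_add_smul_add_apply_sub_smul e w t)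
  simp only [Complex.add_re, Complex.mul_re, Complex.mul_im, hmin, ← Complex.ofReal_pow,
    Complex.re_ofNat, Complex.im_ofNat, Complex.ofReal_re, Complex.ofReal_im, Complex.zero_re,
    mul_zero, zero_mul, add_zero, sub_zero] at hsum
  linarith [hsemi (e + (t : ℂ) • w), hsemi (e - (t : ℂ) • w)]

lemma secondVariation_add_secondVariation_I_smul (hR : IsBisesquilinear R)
    (hsym13 : ∀ x y z u, R x y z u = R z y x u) (hsym24 : ∀ x y z u, R x y z u = R x u z y)
    (x w : V) : secondVariation R x w + secondVariation R x (Complex.I • w) = 8 * R w w x x := by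
  have h₁ : R w x x w = R w w x x := (hsym24 w w x x).symm
  have h₂ : R x w w x = R w w x x := (hsym13 w w x x).symm
  have h₃ : R x x w w = R w w x x := by rw [hsym13, hsym24]
  simp only [secondVariation, hR.map_smul₁, hR.map_smul₂, hR.map_smul₃, hR.map_smul₄,
    Complex.conj_I, h₁, h₂, h₃]
  linear_combination (R w x w x + R x w x w - 4 * R w w x x) * Complex.I_mul_I

end IsBisesquilinear

end Bisesquilinear

theorem curvature_nonneg_of_hsc_minimizer_general
    {V : Type*} [NormedAddCommGroup V] [InnerProductSpace ℂ V]
    (R : V → V → V → V → ℂ)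
    (hlin1 : ∀ y z u, IsLinearMap ℂ fun x => R x y z u)
    (hlin3 : ∀ x y u, IsLinearMap ℂ fun z => R x y z u)
    (hadd2 : ∀ x y y' z u, R x (y + y') z u = R x y z u + R x y' z u)
    (hsmul2 : ∀ x y z u (c : ℂ), R x (c • y) z u = conj c * R x y z u)
    (hadd4 : ∀ x y z u u', R x y z (u + u') = R x y z u + R x y z u')
    (hsmul4 : ∀ x y z u (c : ℂ), R x y z (c • u) = conj c * R x y z u)
    (hsym13 : ∀ x y z u, R x y z u = R z y x u)
    (hsym24 : ∀ x y z u, R x y z u = R x u z y)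
    -- semi-positivity of the holomorphic sectional curvature
    (hsemi : ∀ v : V, 0 ≤ (R v v v v).re)
    -- `e` is a unit vector minimizing the holomorphic sectional curvature
    (e : V) (hmin : R e e e e = 0) :
    ∀ v : V, 0 ≤ (R v v e e).re := by
  intro v
  have hR : IsBisesquilinear R :=
    { map_add₁ := fun x x' y z u => (hlin1 y z u).map_add x x'
      map_smul₁ := fun c x y z u => (hlin1 y z u).map_smul c x
      map_add₂ := hadd2
      map_smul₂ := fun c x y z u => hsmul2 x y z u c
      map_add₃ := fun x y z z' u => (hlin3 x y u).map_add z z'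
      map_smul₃ := fun c x y z u => (hlin3 x y u).map_smul c z
      map_add₄ := hadd4
      map_smul₄ := fun c x y z u => hsmul4 x y z u c }
  have hsum :=
    congrArg Complex.re (hR.secondVariation_add_secondVariation_I_smul hsym13 hsym24 e v)
  simp only [Complex.add_re, Complex.mul_re, Complex.re_ofNat, Complex.im_ofNat, zero_mul,
    sub_zero] at hsum
  linarith [hR.secondVariation_re_nonneg hsemi hmin v,
    hR.secondVariation_re_nonneg hsemi hmin (Complex.I • v)]

theorem curvature_nonneg_of_hsc_minimizer
    {V : Type*} [NormedAddCommGroup V] [InnerProductSpace ℂ V]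
    [FiniteDimensional ℂ V]
    (R : V → V → V → V → ℂ)
    (hlin1 : ∀ y z u, IsLinearMap ℂ fun x => R x y z u)
    (hlin3 : ∀ x y u, IsLinearMap ℂ fun z => R x y z u)
    (hadd2 : ∀ x y y' z u, R x (y + y') z u = R x y z u + R x y' z u)
    (hsmul2 : ∀ x y z u (c : ℂ), R x (c • y) z u = conj c * R x y z u)
    (hadd4 : ∀ x y z u u', R x y z (u + u') = R x y z u + R x y z u')
    (hsmul4 : ∀ x y z u (c : ℂ), R x y z (c • u) = conj c * R x y z u)
    (hsym13 : ∀ x y z u, R x y z u = R z y x u)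
    (hsym24 : ∀ x y z u, R x y z u = R x u z y)
    (hherm : ∀ x y z u, R x y z u = conj (R y x u z))
    -- semi-positivity of the holomorphic sectional curvature
    (hsemi : ∀ v : V, 0 ≤ (R v v v v).re)
    -- `e` is a unit vector minimizing the holomorphic sectional curvature
    (e : V) (he : ‖e‖ = 1) (hmin : R e e e e = 0) :
    ∀ v : V, 0 ≤ (R v v e e).re :=
  curvature_nonneg_of_hsc_minimizer_general R hlin1 hlin3 hadd2 hsmul2 hadd4 hsmul4 hsym13 hsym24
    hsemi e hmin
end
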